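/- arXiv:2312.05546 — 6 statements merged into one kernel-verified Lean document; each statement's English description precedes it below -/
import Mathlib

section
/- Let a, b, c be integers with b ≥ 1, c ≥ 0, and a + b + c = 1. Define, for integers a, b with b ≥ 1, the polynomial P_{a,b,2}(ξ) = ∑_{k=0}^{b-1} (a(a+1)⋯(a+k-1) / (k! (b-1-k)!)) · 2^{-a-k} ξ^{b-1-k} (with the empty product for k = 0 equal to 1), and P_{a,b,2} = 0 if b ≤ 0. Then for all real ξ: P_{a,b,2}(ξ) · ξ^c = 2^c · ((b+c-1)! / (b-1)!) · P_{a+c,b+c,2}(ξ). -/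
open Finset

/-- The polynomial `P_{a,b,2}` from the paper: for integers `a, b` with `b ≥ 1`,
`P_{a,b,2}(ξ) = ∑_{k=0}^{b-1} (a(a+1)⋯(a+k-1)/(k!(b-1-k)!)) 2^{-a-k} ξ^{b-1-k}`,
and `P_{a,b,2} = 0` for `b ≤ 0`. -/
noncomputable def Pab2 (a b : ℤ) (ξ : ℝ) : ℝ :=
  if 1 ≤ b then
    ∑ k ∈ Finset.range b.toNat,
      ((∏ i ∈ Finset.range k, ((a : ℝ) + i)) /
          ((Nat.factorial k : ℝ) * (Nat.factorial (b.toNat - 1 - k) : ℝ))) *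
        (2 : ℝ) ^ (-a - (k : ℤ)) * ξ ^ (b.toNat - 1 - k)
  else 0


/-!
With `b = n + 1`, the constraint forces `a = -(n + c)` and `a + c = -n`. The rising factorial of
`-m` of length `k` is `(-1)^k m(m-1)⋯(m-k+1)`, a descending factorial; it vanishes for `k > m`, so
`P_{a+c,b+c,2}` has only the `n + 1` terms of `P_{a,b,2}`, and the two sides agree term by term
because both coefficients equal `(-1)^k (n+c)! / (k! (n-k)! (n+c-k)!)`.
-/

open Nat

theorem prod_range_neg_natCast_add {R : Type*} [CommRing R] (n k : ℕ) :
    ∏ i ∈ range k, (-(n : R) + i) = (-1) ^ k * n.descFactorial k := by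
  calc ∏ i ∈ range k, (-(n : R) + i) = ∏ i ∈ range k, (-1) * ((n : R) - i) :=
        prod_congr rfl fun _ _ => by ring
    _ = _ := by
      rw [prod_mul_distrib, prod_const, card_range, ← descPochhammer_eval_eq_prod_range,
        descPochhammer_eval_eq_descFactorial]

theorem Pab2_neg_natCast (n m : ℕ) (ξ : ℝ) :
    Pab2 (-n) (m + 1) ξ = ∑ k ∈ range (m + 1),
      (-1) ^ k * n.descFactorial k / (k ! * (m - k)! : ℝ) * 2 ^ ((n : ℤ) - k) * ξ ^ (m - k) := by
  rw [Pab2, if_pos (by omega)]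
  refine sum_congr (by simp) fun k _ => ?_
  have hm : ((m : ℤ) + 1).toNat - 1 = m := by omega
  simp only [hm, Int.cast_neg, Int.cast_natCast, neg_neg, prod_range_neg_natCast_add]

theorem natCast_descFactorial_eq_div {K : Type*} [Field K] [CharZero K] {n k : ℕ} (hk : k ≤ n) :
    (n.descFactorial k : K) = n ! / (n - k)! := by
  rw [eq_div_iff (Nat.cast_ne_zero.2 (factorial_ne_zero _)), mul_comm, ← Nat.cast_mul,
    factorial_mul_descFactorial hk]

theorem descFactorial_div_factorial_sub {K : Type*} [Field K] [CharZero K] {n k : ℕ} (c : ℕ)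
    (hk : k ≤ n) :
    ((n + c).descFactorial k : K) / (n - k)! =
      (n + c)! / n ! * n.descFactorial k / (n + c - k)! := by
  rw [natCast_descFactorial_eq_div hk, natCast_descFactorial_eq_div (by omega : k ≤ n + c),
    div_mul_div_cancel₀ (Nat.cast_ne_zero.2 (factorial_ne_zero n)), div_right_comm]

theorem Pab2_neg_mul_pow (n c : ℕ) (ξ : ℝ) :
    Pab2 (-((n + c : ℕ) : ℤ)) (n + 1) ξ * ξ ^ c =
      2 ^ c * ((n + c)! / n ! : ℝ) * Pab2 (-n) ((n + c : ℕ) + 1) ξ := by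
  rw [Pab2_neg_natCast, Pab2_neg_natCast, sum_mul, mul_sum,
    ← sum_subset (range_subset_range.2 (by omega : n + 1 ≤ n + c + 1))]
  · refine sum_congr rfl fun k hk => ?_
    have hkn : k ≤ n := by rw [mem_range] at hk; omega
    have hξ : ξ ^ (n + c - k) = ξ ^ (n - k) * ξ ^ c := by rw [← pow_add]; congr 1; omega
    have hpow : (2 : ℝ) ^ (((n + c : ℕ) : ℤ) - k) = 2 ^ c * 2 ^ ((n : ℤ) - k) := by
      rw [← zpow_natCast, ← zpow_add₀ two_ne_zero]; congr 1; push_cast; ring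
    rw [hξ, hpow]
    linear_combination ((-1) ^ k / k ! * 2 ^ c * 2 ^ ((n : ℤ) - k) * ξ ^ (n - k) * ξ ^ c : ℝ) *
      descFactorial_div_factorial_sub (K := ℝ) c hkn
  · intro k _ hk
    rw [mem_range, not_lt] at hk
    rw [descFactorial_eq_zero_iff_lt.2 (by omega)]
    simp

theorem stmt_0 (a b c : ℤ) (hb : 1 ≤ b) (hc : 0 ≤ c) (habc : a + b + c = 1) (ξ : ℝ) :
    Pab2 a b ξ * ξ ^ c.toNat =
      (2 : ℝ) ^ c.toNat * ((Nat.factorial (b + c - 1).toNat : ℝ) /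
        (Nat.factorial (b - 1).toNat : ℝ)) * Pab2 (a + c) (b + c) ξ := by
  obtain ⟨n, rfl⟩ : ∃ n : ℕ, b = n + 1 := ⟨(b - 1).toNat, by omega⟩
  lift c to ℕ using hc
  obtain rfl : a = -((n + c : ℕ) : ℤ) := by push_cast; omega
  have hbc : (n : ℤ) + 1 + c = ((n + c : ℕ) : ℤ) + 1 := by push_cast; ring
  have hac : -((n + c : ℕ) : ℤ) + c = -n := by push_cast; ring
  rw [hbc, hac, add_sub_cancel_right, add_sub_cancel_right, Int.toNat_natCast, Int.toNat_natCast,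
    Int.toNat_natCast]
  exact Pab2_neg_mul_pow n c ξ
end

section
/- Let l ≥ 1 and c ≥ 0 be integers. Then det[ (j + k + c - 2)! ]_{j,k=1}^{l} = (∏_{k=0}^{l-1} (k + c)!) · (∏_{k=1}^{l-1} k!). -/
/-!
Write `(a + k)! = a! · (a + 1)^(k)` with the rising factorial `x^(k)`, a monic polynomial of degree
`k` in `x`. Pulling `a_j!` out of row `j` of `[(a_j + k)!]` leaves `[(a_j + 1)^(k)]`, whose
determinant is the Vandermonde determinant of the nodes `a_j + 1` because its columns are monic of
degrees `0, 1, …`. For the Hankel nodes `a_j = j + c` this is the Vandermonde determinant of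
`0, 1, …, l - 1` by translation invariance, namely the superfactorial `∏_{k<l} k!`.
-/

open Finset Matrix Polynomial
open scoped Nat

theorem Nat.cast_factorial_add_eq_mul_eval_ascPochhammer {R : Type*} [Semiring R] (a k : ℕ) :
    ((a + k)! : R) = a ! * (ascPochhammer R k).eval ((a + 1 : ℕ) : R) := by
  rw [← ascPochhammer_eval_cast, ascPochhammer_nat_eq_ascFactorial, ← Nat.cast_mul,
    Nat.factorial_mul_ascFactorial]

theorem Matrix.det_factorial_add {R : Type*} [CommRing R] [IsDomain R] {n : ℕ} (a : Fin n → ℕ) :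
    det (of fun j k : Fin n => ((a j + k)! : R)) =
      (∏ j, ((a j)! : R)) * det (vandermonde fun j => (a j : R)) := by
  simp_rw [Nat.cast_factorial_add_eq_mul_eval_ascPochhammer]
  refine (det_mul_column (fun j => ((a j)! : R))
    (of fun j k => (ascPochhammer R k).eval ((a j + 1 : ℕ) : R))).trans ?_
  rw [← det_eval_matrixOfPolynomials_eq_det_vandermonde _ _
      (fun k => ascPochhammer_natDegree R k) (fun k => monic_ascPochhammer R k)]
  push_cast
  rw [det_vandermonde_add]

theorem Matrix.det_vandermonde_id_eq_prod_Icc_factorial {R : Type*} [CommRing R] :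
    ∀ l : ℕ, det (vandermonde fun i : Fin l => (i : R)) = ∏ k ∈ Icc 1 (l - 1), (k ! : R)
  | 0 => by simp
  | n + 1 => by
    rw [det_vandermonde_id_eq_superFactorial, Nat.add_sub_cancel, ← Nat.prod_Icc_factorial,
      Nat.cast_prod]

theorem stmt_7_general (l c : ℕ) :
    Matrix.det (Matrix.of fun j k : Fin l =>
        (Nat.factorial ((j : ℕ) + (k : ℕ) + c) : ℤ)) =
      (∏ k ∈ Finset.range l, (Nat.factorial (k + c) : ℤ)) *
        ∏ k ∈ Finset.Icc 1 (l - 1), (Nat.factorial k : ℤ) := by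
  have hankel := det_factorial_add (R := ℤ) fun j : Fin l => (j : ℕ) + c
  simp_rw [add_right_comm _ c] at hankel
  rw [hankel, Fin.prod_univ_eq_prod_range (fun k => ((k + c)! : ℤ))]
  push_cast
  rw [det_vandermonde_add, det_vandermonde_id_eq_prod_Icc_factorial]

theorem stmt_7 (l c : ℕ) (hl : 1 ≤ l) :
    Matrix.det (Matrix.of fun j k : Fin l =>
        (Nat.factorial ((j : ℕ) + (k : ℕ) + c) : ℤ)) =
      (∏ k ∈ Finset.range l, (Nat.factorial (k + c) : ℤ)) *
        ∏ k ∈ Finset.Icc 1 (l - 1), (Nat.factorial k : ℤ) :=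
  stmt_7_general l c
end

section
/- Let l ≥ 1, let π(x) = ∏_{1 ≤ j < k ≤ l}(x_j - x_k), and let ∂(π) = ∏_{1 ≤ j < k ≤ l}(∂_{x_j} - ∂_{x_k}). Then for every smooth function f: ℝ^l → ℂ, one has (∂(π)(π · f))(0) = (∏_{k=1}^{l} k!) · f(0). -/
open Finset

/-- The constant-coefficient differential operator
`∂(π) = ∏_{1 ≤ j < k ≤ l} (∂_{x_j} - ∂_{x_k})` applied to a function
`h : ℝ^l → ℂ`; the factors commute on smooth functions, so they are applied
successively in some fixed order.  Here `∂_{x_j} h (x) = (Dh)(x)(e_j)`. -/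
noncomputable def vandermondeDiffOp (l : ℕ) (h : (Fin l → ℝ) → ℂ) :
    (Fin l → ℝ) → ℂ :=
  ((Finset.univ.filter fun q : Fin l × Fin l => q.1 < q.2).toList).foldl
    (fun g q => fun x =>
      fderiv ℝ g x (Pi.single q.1 1) - fderiv ℝ g x (Pi.single q.2 1)) h

namespace Stmt9Aux
open MvPolynomial

variable {l : ℕ}

noncomputable def dfact (d : Fin l →₀ ℕ) : ℝ := ∏ i, ((d i).factorial : ℝ)

noncomputable def B (p q : MvPolynomial (Fin l) ℝ) : ℝ :=
  ∑ d ∈ p.support, coeff d p * coeff d q * dfact d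

lemma B_eq_sum {p : MvPolynomial (Fin l) ℝ} {s : Finset (Fin l →₀ ℕ)} (h : p.support ⊆ s)
    (q : MvPolynomial (Fin l) ℝ) :
    B p q = ∑ d ∈ s, coeff d p * coeff d q * dfact d :=
  Finset.sum_subset h (by intro d _ hd; rw [notMem_support_iff.mp hd]; ring)

lemma B_zero_left (q : MvPolynomial (Fin l) ℝ) : B 0 q = 0 := by
  simp [B]

lemma B_add_left (a b q : MvPolynomial (Fin l) ℝ) : B (a + b) q = B a q + B b q := by
  rw [B_eq_sum (s := a.support ∪ b.support) support_add q,
    B_eq_sum (s := a.support ∪ b.support) subset_union_left q,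
    B_eq_sum (s := a.support ∪ b.support) subset_union_right q, ← Finset.sum_add_distrib]
  exact Finset.sum_congr rfl fun d _ => by rw [coeff_add]; ring

lemma B_sub_left (a b q : MvPolynomial (Fin l) ℝ) : B (a - b) q = B a q - B b q := by
  have hs : (a - b).support ⊆ a.support ∪ b.support := support_sub _ _ _
  rw [B_eq_sum hs q, B_eq_sum (s := a.support ∪ b.support) subset_union_left q,
    B_eq_sum (s := a.support ∪ b.support) subset_union_right q, ← Finset.sum_sub_distrib]
  exact Finset.sum_congr rfl fun d _ => by rw [coeff_sub]; ring

lemma B_neg_left (a q : MvPolynomial (Fin l) ℝ) : B (-a) q = - B a q := by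
  have := B_sub_left 0 a q
  simpa [B_zero_left] using this

lemma B_add_right (p a b : MvPolynomial (Fin l) ℝ) : B p (a + b) = B p a + B p b := by
  rw [B, B, B, ← Finset.sum_add_distrib]
  exact Finset.sum_congr rfl fun d _ => by rw [coeff_add]; ring

lemma B_sub_right (p a b : MvPolynomial (Fin l) ℝ) : B p (a - b) = B p a - B p b := by
  rw [B, B, B, ← Finset.sum_sub_distrib]
  exact Finset.sum_congr rfl fun d _ => by rw [coeff_sub]; ring

lemma B_neg_right (p a : MvPolynomial (Fin l) ℝ) : B p (-a) = - B p a := by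
  have := B_sub_right p 0 a
  simpa [B] using this

lemma B_sum_left {ι : Type*} (s : Finset ι) (p : ι → MvPolynomial (Fin l) ℝ)
    (q : MvPolynomial (Fin l) ℝ) : B (∑ i ∈ s, p i) q = ∑ i ∈ s, B (p i) q := by
  induction s using Finset.cons_induction with
  | empty => simp [B_zero_left]
  | cons i s hi ih => rw [Finset.sum_cons, B_add_left, ih, Finset.sum_cons]

lemma B_zero_right (p : MvPolynomial (Fin l) ℝ) : B p 0 = 0 := by simp [B]

lemma B_sum_right {ι : Type*} (s : Finset ι) (p : MvPolynomial (Fin l) ℝ)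
    (q : ι → MvPolynomial (Fin l) ℝ) : B p (∑ i ∈ s, q i) = ∑ i ∈ s, B p (q i) := by
  induction s using Finset.cons_induction with
  | empty => simp [B_zero_right]
  | cons i s hi ih => rw [Finset.sum_cons, B_add_right, ih, Finset.sum_cons]

lemma B_monomial_left (d : Fin l →₀ ℕ) (c : ℝ) (q : MvPolynomial (Fin l) ℝ) :
    B (monomial d c) q = c * coeff d q * dfact d := by
  rw [B_eq_sum (s := {d}) support_monomial_subset q, Finset.sum_singleton, coeff_monomial,
    if_pos rfl]

lemma B_one_left (q : MvPolynomial (Fin l) ℝ) : B 1 q = coeff 0 q := by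
  have h1 : (1 : MvPolynomial (Fin l) ℝ) = monomial 0 1 := by simp [monomial_zero']
  rw [h1, B_monomial_left]
  simp [dfact]

lemma dfact_add_single (d : Fin l →₀ ℕ) (j : Fin l) :
    dfact (d + Finsupp.single j 1) = (d j + 1 : ℕ) * dfact d := by
  unfold dfact
  rw [← Finset.mul_prod_erase univ _ (mem_univ j), ← Finset.mul_prod_erase univ
    (fun i => ((d i).factorial : ℝ)) (mem_univ j), ← mul_assoc]
  have h1 : (d + Finsupp.single j 1 : Fin l →₀ ℕ) j = d j + 1 := by simp
  have h2 : ∀ i ∈ univ.erase j, (((d + Finsupp.single j 1 : Fin l →₀ ℕ) i).factorial : ℝ)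
      = ((d i).factorial : ℝ) := by
    intro i hi
    have : (Finsupp.single j 1) i = 0 := Finsupp.single_eq_of_ne' (Finset.ne_of_mem_erase hi).symm
    simp [this]
  rw [Finset.prod_congr rfl h2, h1]
  push_cast [Nat.factorial_succ]
  ring

lemma coeff_pderiv (j : Fin l) (p : MvPolynomial (Fin l) ℝ) (e : Fin l →₀ ℕ) :
    coeff e (pderiv j p) = (e j + 1 : ℕ) * coeff (e + Finsupp.single j 1) p := by
  induction p using MvPolynomial.induction_on' with
  | add p q hp hq => simp only [map_add, coeff_add, hp, hq]; ring
  | monomial d c =>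
    rw [pderiv_monomial, coeff_monomial, coeff_monomial]
    by_cases h : d = e + Finsupp.single j 1
    · subst h
      rw [if_pos (add_tsub_cancel_right _ _), if_pos rfl]
      have : (e + Finsupp.single j 1 : Fin l →₀ ℕ) j = e j + 1 := by simp
      rw [this]
      push_cast
      ring
    · rw [if_neg h, mul_zero]
      by_cases hd : d j = 0
      · split_ifs with h' <;> simp [hd]
      · have hne : d - Finsupp.single j 1 ≠ e := by
          intro he
          apply h
          rw [← he, tsub_add_cancel_of_le]
          exact Finsupp.single_le_iff.mpr (Nat.one_le_iff_ne_zero.mpr hd)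
        rw [if_neg hne]

lemma B_X_mul (j : Fin l) (r p : MvPolynomial (Fin l) ℝ) :
    B (X j * r) p = B r (pderiv j p) := by
  induction r using MvPolynomial.induction_on' with
  | add a b ha hb => rw [mul_add, B_add_left, B_add_left, ha, hb]
  | monomial d c =>
    have hX : (X j : MvPolynomial (Fin l) ℝ) * monomial d c
        = monomial (d + Finsupp.single j 1) c := by
      rw [X, monomial_mul, one_mul, add_comm]
    rw [hX, B_monomial_left, B_monomial_left, coeff_pderiv, dfact_add_single]
    ring

noncomputable def polyStep (p : MvPolynomial (Fin l) ℝ) (q : Fin l × Fin l) :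
    MvPolynomial (Fin l) ℝ := pderiv q.1 p - pderiv q.2 p

lemma foldl_eval0 (L : List (Fin l × Fin l)) (p : MvPolynomial (Fin l) ℝ) :
    eval 0 (L.foldl polyStep p)
      = B ((L.map fun q => X q.1 - X q.2).prod) p := by
  induction L generalizing p with
  | nil =>
    simp only [List.foldl_nil, List.map_nil, List.prod_nil, B_one_left]
    rw [eval_zero]
    rfl
  | cons q L ih =>
    rw [List.foldl_cons, ih, List.map_cons, List.prod_cons, sub_mul, B_sub_left,
      B_X_mul, B_X_mul, ← B_sub_right]
    rfl


noncomputable def exq (σ : Equiv.Perm (Fin l)) : Fin l →₀ ℕ :=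
  Finsupp.equivFunOnFinite.symm fun j => ((σ⁻¹ j : Fin l) : ℕ)

lemma exq_apply (σ : Equiv.Perm (Fin l)) (j : Fin l) : exq σ j = ((σ⁻¹ j : Fin l) : ℕ) := rfl

lemma exq_injective : Function.Injective (exq (l := l)) := by
  intro σ τ h
  have h1 : ∀ j, ((σ⁻¹ j : Fin l) : ℕ) = ((τ⁻¹ j : Fin l) : ℕ) := fun j => by
    rw [← exq_apply, ← exq_apply, h]
  have h2 : σ⁻¹ = τ⁻¹ := Equiv.ext fun j => Fin.val_injective (h1 j)
  simpa using congrArg Inv.inv h2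

lemma vandermonde_det_expand :
    (Matrix.vandermonde (X : Fin l → MvPolynomial (Fin l) ℝ)).det
      = ∑ σ : Equiv.Perm (Fin l), monomial (exq σ) ((Equiv.Perm.sign σ : ℤ) : ℝ) := by
  rw [Matrix.det_apply]
  refine Finset.sum_congr rfl fun σ _ => ?_
  have h1 : ∏ i, Matrix.vandermonde (X : Fin l → MvPolynomial (Fin l) ℝ) (σ i) i
      = monomial (exq σ) 1 := by
    have h2 : ∀ i ∈ univ, Matrix.vandermonde (X : Fin l → MvPolynomial (Fin l) ℝ) (σ i) i
        = (fun j => X j ^ ((σ⁻¹ j : Fin l) : ℕ)) (σ i) := by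
      intro i _
      simp [Matrix.vandermonde_apply]
    rw [Finset.prod_congr rfl h2,
      Equiv.prod_comp σ (fun j => (X j : MvPolynomial (Fin l) ℝ) ^ ((σ⁻¹ j : Fin l) : ℕ)),
      monomial_eq, C_1, one_mul, Finsupp.prod_fintype]
    · exact Finset.prod_congr rfl fun j _ => by rw [exq_apply]
    · intro i; exact pow_zero _
  rw [h1, Units.smul_def, MvPolynomial.smul_monomial]
  congr 1
  simp

lemma B_det_det :
    B (Matrix.vandermonde (X : Fin l → MvPolynomial (Fin l) ℝ)).det
      (Matrix.vandermonde (X : Fin l → MvPolynomial (Fin l) ℝ)).det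
      = (Nat.factorial l : ℝ) * ∏ i : Fin l, ((i : ℕ).factorial : ℝ) := by
  rw [vandermonde_det_expand, B_sum_left]
  have key : ∀ σ : Equiv.Perm (Fin l),
      B (monomial (exq σ) ((Equiv.Perm.sign σ : ℤ) : ℝ))
        (∑ τ : Equiv.Perm (Fin l), monomial (exq τ) ((Equiv.Perm.sign τ : ℤ) : ℝ))
      = ∏ i : Fin l, ((i : ℕ).factorial : ℝ) := by
    intro σ
    rw [B_sum_right, Finset.sum_eq_single σ]
    · rw [B_monomial_left, coeff_monomial, if_pos rfl]
      have hsgn : ((Equiv.Perm.sign σ : ℤ) : ℝ) * ((Equiv.Perm.sign σ : ℤ) : ℝ) = 1 := by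
        rw [← Int.cast_mul, ← Units.val_mul, Int.units_mul_self]; norm_num
      have hd : dfact (exq σ) = ∏ i : Fin l, ((i : ℕ).factorial : ℝ) := by
        unfold dfact
        have := Equiv.prod_comp σ⁻¹ (fun i : Fin l => (((i : ℕ)).factorial : ℝ))
        rw [← this]
        exact Finset.prod_congr rfl fun i _ => by rw [exq_apply]
      rw [hsgn, one_mul, hd]
    · intro τ _ hτ
      rw [B_monomial_left, coeff_monomial, if_neg fun h => hτ (exq_injective h), mul_zero,
        zero_mul]
    · intro h; exact absurd (mem_univ σ) h
  rw [Finset.sum_congr rfl fun σ _ => key σ, Finset.sum_const, card_univ, Fintype.card_perm,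
    Fintype.card_fin, nsmul_eq_mul]

lemma prod_neg' {ι : Type*} (s : Finset ι) (g : ι → MvPolynomial (Fin l) ℝ) :
    ∏ i ∈ s, (-g i) = (-1) ^ s.card * ∏ i ∈ s, g i := by
  rw [← Finset.prod_const, ← Finset.prod_mul_distrib]
  exact Finset.prod_congr rfl fun i _ => by rw [neg_one_mul]

lemma pi_eq_det :
    (∏ j : Fin l, ∏ k ∈ Ioi j, (X j - X k : MvPolynomial (Fin l) ℝ))
      = (-1) ^ (∑ j : Fin l, (Ioi j).card)
        * (Matrix.vandermonde (X : Fin l → MvPolynomial (Fin l) ℝ)).det := by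
  rw [Matrix.det_vandermonde]
  have h1 : ∀ j : Fin l, ∏ k ∈ Ioi j, (X j - X k : MvPolynomial (Fin l) ℝ)
      = (-1) ^ (Ioi j).card * ∏ k ∈ Ioi j, (X k - X j : MvPolynomial (Fin l) ℝ) := by
    intro j
    rw [← prod_neg']
    exact Finset.prod_congr rfl fun k _ => by rw [neg_sub]
  rw [Finset.prod_congr rfl fun j _ => h1 j, Finset.prod_mul_distrib,
    Finset.prod_pow_eq_pow_sum]

lemma B_pi_pi :
    B (∏ j : Fin l, ∏ k ∈ Ioi j, (X j - X k : MvPolynomial (Fin l) ℝ))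
      (∏ j : Fin l, ∏ k ∈ Ioi j, (X j - X k : MvPolynomial (Fin l) ℝ))
      = (Nat.factorial l : ℝ) * ∏ i : Fin l, ((i : ℕ).factorial : ℝ) := by
  rw [pi_eq_det]
  rcases neg_one_pow_eq_or (MvPolynomial (Fin l) ℝ) (∑ j : Fin l, (Ioi j).card) with h | h <;>
    rw [h]
  · rw [one_mul, B_det_det]
  · rw [neg_one_mul, B_neg_left, B_neg_right, neg_neg, B_det_det]


/-! ### Homogeneity -/

lemma degree_eq_sum (d : Fin l →₀ ℕ) : d.degree = ∑ i : Fin l, d i :=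
  Finset.sum_subset (subset_univ _) fun _ _ hx => Finsupp.notMem_support_iff.mp hx

lemma isHomogeneous_pderiv {n : ℕ} {p : MvPolynomial (Fin l) ℝ} (hp : p.IsHomogeneous (n + 1))
    (j : Fin l) : (pderiv j p).IsHomogeneous n := by
  rw [p.as_sum, map_sum]
  apply IsHomogeneous.sum
  intro d hd
  rw [pderiv_monomial]
  by_cases hdj : d j = 0
  · simp only [hdj, Nat.cast_zero, mul_zero, map_zero]
    exact isHomogeneous_zero _ _ _
  · apply isHomogeneous_monomial
    have hdeg : d.degree = n + 1 := by
      rw [Finsupp.degree_eq_weight_one]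
      exact hp (mem_support_iff.mp hd)
    rw [degree_eq_sum] at hdeg
    rw [degree_eq_sum]
    have hsum : d j + ∑ i ∈ univ.erase j, d i = n + 1 := by
      rw [Finset.add_sum_erase univ (fun i => d i) (mem_univ j)]; exact hdeg
    have h1 : (d - Finsupp.single j 1 : Fin l →₀ ℕ) j = d j - 1 := by
      rw [Finsupp.tsub_apply]; simp
    have h2 : ∀ i ∈ univ.erase j, (d - Finsupp.single j 1 : Fin l →₀ ℕ) i = d i := by
      intro i hi
      rw [Finsupp.tsub_apply, Finsupp.single_eq_of_ne' (Finset.ne_of_mem_erase hi).symm]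
      simp
    rw [← Finset.add_sum_erase univ (fun i => (d - Finsupp.single j 1 : Fin l →₀ ℕ) i)
      (mem_univ j), h1, Finset.sum_congr rfl h2]
    have h3 : ∑ i ∈ univ.erase j, d i = (univ.erase j).sum ⇑d := rfl
    omega

lemma pi_homogeneous :
    (∏ j : Fin l, ∏ k ∈ Ioi j, (X j - X k : MvPolynomial (Fin l) ℝ)).IsHomogeneous
      (∑ j : Fin l, (Ioi j).card) := by
  apply IsHomogeneous.prod
  intro j _
  rw [Finset.card_eq_sum_ones]
  apply IsHomogeneous.prod
  intro k _
  exact (isHomogeneous_X _ j).sub (isHomogeneous_X _ k)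

/-! ### Analytic lemmas about polynomial evaluation -/

noncomputable def evalFnC (Q : MvPolynomial (Fin l) ℝ) : (Fin l → ℝ) → ℂ :=
  fun x => ((eval x Q : ℝ) : ℂ)

lemma contDiff_evalFn (Q : MvPolynomial (Fin l) ℝ) :
    ContDiff ℝ (⊤ : ℕ∞) (fun x : Fin l → ℝ => eval x Q) := by
  induction Q using MvPolynomial.induction_on with
  | C a => simpa using contDiff_const
  | add p q hp hq => simpa using hp.add hq
  | mul_X p i hp =>
    have h : (fun x : Fin l → ℝ => eval x (p * X i)) = fun x => (eval x p) * x i := by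
      funext x; simp
    rw [h]
    exact hp.mul (ContinuousLinearMap.proj (R := ℝ) (φ := fun _ : Fin l => ℝ) i).contDiff

lemma hasFDerivAt_evalFn (Q : MvPolynomial (Fin l) ℝ) (x : Fin l → ℝ) :
    HasFDerivAt (fun y : Fin l → ℝ => eval y Q)
      (∑ j, eval x (pderiv j Q) • ContinuousLinearMap.proj (R := ℝ) (φ := fun _ : Fin l => ℝ) j)
      x := by
  induction Q using MvPolynomial.induction_on with
  | C a =>
    have h : (∑ j, eval x (pderiv j (C a : MvPolynomial (Fin l) ℝ)) •
        ContinuousLinearMap.proj (R := ℝ) (φ := fun _ : Fin l => ℝ) j)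
        = (0 : (Fin l → ℝ) →L[ℝ] ℝ) := by
      simp
    rw [h]
    simpa using hasFDerivAt_const (a : ℝ) x
  | add p q hp hq =>
    have h := hp.add hq
    have he : (fun y : Fin l → ℝ => eval y (p + q))
        = fun y => eval y p + eval y q := by funext y; simp
    rw [he]
    refine h.congr_fderiv ?_
    symm
    rw [← Finset.sum_add_distrib]
    refine Finset.sum_congr rfl fun j _ => ?_
    rw [map_add, map_add, add_smul]
  | mul_X p i hp =>
    have h := hp.mul ((ContinuousLinearMap.proj (R := ℝ) (φ := fun _ : Fin l => ℝ) i).hasFDerivAt)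
    have he : (fun y : Fin l → ℝ => eval y (p * X i)) = fun y => eval y p * y i := by
      funext y; simp
    rw [he]
    refine h.congr_fderiv ?_
    symm
    ext v
    have hps : ∀ k : Fin l, eval x (pderiv k (X i) : MvPolynomial (Fin l) ℝ)
        = if k = i then 1 else 0 := by
      intro k
      rcases eq_or_ne k i with hki | hki
      · subst hki; simp [pderiv_X_self]
      · rw [pderiv_X_of_ne (Ne.symm hki)]; simp [hki]
    simp only [ContinuousLinearMap.sum_apply, ContinuousLinearMap.smul_apply,
      ContinuousLinearMap.proj_apply, ContinuousLinearMap.add_apply, pderiv_mul, map_add,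
      map_mul, eval_X, hps, smul_eq_mul, mul_ite, mul_one, mul_zero, ite_mul, zero_mul,
      add_mul]
    rw [Finset.sum_add_distrib, add_comm]
    congr 1
    · have : ∀ k : Fin l, (if k = i then eval x p * v k else 0)
          = if k = i then eval x p * v i else 0 := by
        intro k; split_ifs with hk
        · rw [hk]
        · rfl
      rw [Finset.sum_congr rfl fun k _ => this k, Finset.sum_ite_eq' univ i
        (fun _ => eval x p * v i)]
      simp
    · rw [Finset.mul_sum]
      exact Finset.sum_congr rfl fun k _ => by ring

lemma contDiff_evalFnC (Q : MvPolynomial (Fin l) ℝ) : ContDiff ℝ (⊤ : ℕ∞) (evalFnC Q) :=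
  Complex.ofRealCLM.contDiff.comp (contDiff_evalFn Q)

lemma fderiv_evalFnC (Q : MvPolynomial (Fin l) ℝ) (x : Fin l → ℝ) (v : Fin l → ℝ) :
    fderiv ℝ (evalFnC Q) x v = ∑ j, (v j : ℂ) * evalFnC (pderiv j Q) x := by
  have h2 : HasFDerivAt (evalFnC Q)
      (Complex.ofRealCLM.comp (∑ j, eval x (pderiv j Q) •
        ContinuousLinearMap.proj (R := ℝ) (φ := fun _ : Fin l => ℝ) j)) x :=
    Complex.ofRealCLM.hasFDerivAt.comp x (hasFDerivAt_evalFn Q x)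
  rw [h2.fderiv]
  simp only [ContinuousLinearMap.coe_comp', Function.comp_apply,
    ContinuousLinearMap.sum_apply, ContinuousLinearMap.smul_apply,
    ContinuousLinearMap.proj_apply, smul_eq_mul, Complex.ofRealCLM_apply]
  push_cast
  exact Finset.sum_congr rfl fun j _ => by rw [evalFnC]; ring

lemma fderiv_evalFnC_single (Q : MvPolynomial (Fin l) ℝ) (x : Fin l → ℝ) (j : Fin l) :
    fderiv ℝ (evalFnC Q) x (Pi.single j 1) = evalFnC (pderiv j Q) x := by
  rw [fderiv_evalFnC]
  have h : ∀ k : Fin l, ((Pi.single j 1 : Fin l → ℝ) k : ℂ) * evalFnC (pderiv k Q) x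
      = if k = j then evalFnC (pderiv k Q) x else 0 := by
    intro k
    rcases eq_or_ne k j with hkj | hkj
    · subst hkj; simp
    · simp [Pi.single_eq_of_ne hkj, hkj]
  rw [Finset.sum_congr rfl fun k _ => h k, Finset.sum_ite_eq' univ j
    (fun k => evalFnC (pderiv k Q) x)]
  simp

/-! ### Functions all of whose derivatives of order `< m` vanish at `0` -/

def Zc : ℕ → ((Fin l → ℝ) → ℂ) → Prop
  | 0, h => ContDiff ℝ (⊤ : ℕ∞) h
  | m + 1, h => ContDiff ℝ (⊤ : ℕ∞) h ∧ h 0 = 0 ∧ ∀ v, Zc m (fun x => fderiv ℝ h x v)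

lemma Zc.contDiff {m : ℕ} {h : (Fin l → ℝ) → ℂ} (hz : Zc m h) : ContDiff ℝ (⊤ : ℕ∞) h := by
  cases m with
  | zero => exact hz
  | succ m => exact hz.1

lemma Zc.congr {m : ℕ} {h g : (Fin l → ℝ) → ℂ} (e : ∀ x, h x = g x) (hz : Zc m h) : Zc m g := by
  have : h = g := funext e
  rwa [← this]

lemma contDiff_fderiv_apply {g : (Fin l → ℝ) → ℂ} (hg : ContDiff ℝ (⊤ : ℕ∞) g) (v : Fin l → ℝ) :
    ContDiff ℝ (⊤ : ℕ∞) (fun x => fderiv ℝ g x v) :=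
  (hg.fderiv_right (by simp)).clm_apply contDiff_const

lemma Zc.add {m : ℕ} {f g : (Fin l → ℝ) → ℂ} (hf : Zc m f) (hg : Zc m g) :
    Zc m (fun x => f x + g x) := by
  induction m generalizing f g with
  | zero => exact ContDiff.add hf hg
  | succ m ih =>
    refine ⟨hf.1.add hg.1, by show f 0 + g 0 = 0; rw [hf.2.1, hg.2.1, add_zero], fun v => ?_⟩
    have e : ∀ x, fderiv ℝ f x v + fderiv ℝ g x v
        = fderiv ℝ (fun y => f y + g y) x v := by
      intro x
      rw [fderiv_fun_add ((hf.1.differentiable (by simp)).differentiableAt)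
        ((hg.1.differentiable (by simp)).differentiableAt)]
      rfl
    exact Zc.congr e (ih (hf.2.2 v) (hg.2.2 v))

lemma Zc.sub {m : ℕ} {f g : (Fin l → ℝ) → ℂ} (hf : Zc m f) (hg : Zc m g) :
    Zc m (fun x => f x - g x) := by
  induction m generalizing f g with
  | zero => exact ContDiff.sub hf hg
  | succ m ih =>
    refine ⟨hf.1.sub hg.1, by show f 0 - g 0 = 0; rw [hf.2.1, hg.2.1, sub_zero], fun v => ?_⟩
    have e : ∀ x, fderiv ℝ f x v - fderiv ℝ g x v
        = fderiv ℝ (fun y => f y - g y) x v := by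
      intro x
      rw [fderiv_fun_sub ((hf.1.differentiable (by simp)).differentiableAt)
        ((hg.1.differentiable (by simp)).differentiableAt)]
      rfl
    exact Zc.congr e (ih (hf.2.2 v) (hg.2.2 v))

lemma Zc.zero {m : ℕ} : Zc m (fun _ : Fin l → ℝ => (0 : ℂ)) := by
  induction m with
  | zero => exact contDiff_const
  | succ m ih =>
    refine ⟨contDiff_const, rfl, fun v => ?_⟩
    have e : ∀ x : Fin l → ℝ, (0 : ℂ) = fderiv ℝ (fun _ : Fin l → ℝ => (0 : ℂ)) x v := by
      intro x
      rw [fderiv_fun_const]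
      simp
    exact Zc.congr e ih

lemma Zc.const_mul {m : ℕ} {f : (Fin l → ℝ) → ℂ} (c : ℂ) (hf : Zc m f) :
    Zc m (fun x => c * f x) := by
  induction m generalizing f with
  | zero => exact ContDiff.mul contDiff_const hf
  | succ m ih =>
    refine ⟨contDiff_const.mul hf.1, by show c * f 0 = 0; rw [hf.2.1, mul_zero], fun v => ?_⟩
    have e : ∀ x, c * fderiv ℝ f x v = fderiv ℝ (fun y => c * f y) x v := by
      intro x
      rw [fderiv_const_mul ((hf.1.differentiable (by simp)).differentiableAt)]
      rfl
    exact Zc.congr e (ih (hf.2.2 v))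

lemma Zc.of_succ : ∀ (m : ℕ) {h : (Fin l → ℝ) → ℂ}, Zc (m + 1) h → Zc m h := by
  intro m
  induction m with
  | zero => exact fun hz => hz.1
  | succ m ih => exact fun hz => ⟨hz.1, hz.2.1, fun v => ih (hz.2.2 v)⟩

lemma Zc.sum {m : ℕ} {ι : Type*} (s : Finset ι) (F : ι → (Fin l → ℝ) → ℂ)
    (h : ∀ i ∈ s, Zc m (F i)) : Zc m (fun x => ∑ i ∈ s, F i x) := by
  induction s using Finset.cons_induction with
  | empty => exact Zc.congr (fun x => by simp) Zc.zero
  | cons i s hi ih =>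
    have := (h i (Finset.mem_cons_self i s)).add (ih fun j hj => h j (Finset.mem_cons_of_mem hj))
    exact Zc.congr (fun x => by rw [Finset.sum_cons]) this

lemma Zc.mul_smooth {m : ℕ} {f g : (Fin l → ℝ) → ℂ} (hf : Zc m f) (hg : ContDiff ℝ (⊤ : ℕ∞) g) :
    Zc m (fun x => f x * g x) := by
  induction m generalizing f g with
  | zero => exact ContDiff.mul hf hg
  | succ m ih =>
    refine ⟨hf.1.mul hg, by show f 0 * g 0 = 0; rw [hf.2.1, zero_mul], fun v => ?_⟩
    have e : ∀ x, fderiv ℝ f x v * g x + f x * fderiv ℝ g x v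
        = fderiv ℝ (fun y => f y * g y) x v := by
      intro x
      rw [fderiv_fun_mul ((hf.1.differentiable (by simp)).differentiableAt)
        ((hg.differentiable (by simp)).differentiableAt)]
      simp only [ContinuousLinearMap.add_apply, ContinuousLinearMap.smul_apply, smul_eq_mul]
      ring
    exact Zc.congr e ((ih (hf.2.2 v) hg).add (ih (Zc.of_succ m hf)
      (contDiff_fderiv_apply hg v)))

lemma Zc.homog {m : ℕ} {Q : MvPolynomial (Fin l) ℝ} (hQ : Q.IsHomogeneous m) :
    Zc m (evalFnC Q) := by
  induction m generalizing Q with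
  | zero => exact contDiff_evalFnC Q
  | succ m ih =>
    refine ⟨contDiff_evalFnC Q, ?_, fun v => ?_⟩
    · have h0 : coeff 0 Q = 0 := hQ.coeff_eq_zero (by simp)
      show ((eval (0 : Fin l → ℝ) Q : ℝ) : ℂ) = 0
      have hc : constantCoeff Q = coeff 0 Q := rfl
      rw [eval_zero, hc, h0, Complex.ofReal_zero]
    · have e : ∀ x, ∑ j, (v j : ℂ) * evalFnC (pderiv j Q) x = fderiv ℝ (evalFnC Q) x v :=
        fun x => (fderiv_evalFnC Q x v).symm
      exact Zc.congr e (Zc.sum univ _ fun j _ =>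
        Zc.const_mul _ (ih (isHomogeneous_pderiv hQ j)))

/-! ### Main induction -/

lemma AN (f : (Fin l → ℝ) → ℂ) (hf : ContDiff ℝ (⊤ : ℕ∞) f) :
    ∀ (L : List (Fin l × Fin l)) (Q : MvPolynomial (Fin l) ℝ), Q.IsHomogeneous L.length →
      ∀ r : (Fin l → ℝ) → ℂ, Zc (L.length + 1) r →
      L.foldl (fun g q => fun x =>
          fderiv ℝ g x (Pi.single q.1 1) - fderiv ℝ g x (Pi.single q.2 1))
        (fun x => evalFnC Q x * f x + r x) 0
        = evalFnC (L.foldl polyStep Q) 0 * f 0 := by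
  intro L
  induction L with
  | nil =>
    intro Q _ r hr
    show evalFnC Q 0 * f 0 + r 0 = evalFnC Q 0 * f 0
    rw [hr.2.1, add_zero]
  | cons q L ih =>
    intro Q hQ r hr
    rw [List.foldl_cons, List.foldl_cons]
    have hPf : ∀ x, DifferentiableAt ℝ (fun y => evalFnC Q y * f y) x := fun x =>
      ((((contDiff_evalFnC Q).mul hf).differentiable (by simp)) x)
    have hrd : Differentiable ℝ r := hr.contDiff.differentiable (by simp)
    have key : (fun x => fderiv ℝ (fun y => evalFnC Q y * f y + r y) x (Pi.single q.1 1)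
          - fderiv ℝ (fun y => evalFnC Q y * f y + r y) x (Pi.single q.2 1))
        = fun x => evalFnC (polyStep Q q) x * f x +
          ((evalFnC Q x * (fderiv ℝ f x (Pi.single q.1 1) - fderiv ℝ f x (Pi.single q.2 1)))
            + (fderiv ℝ r x (Pi.single q.1 1) - fderiv ℝ r x (Pi.single q.2 1))) := by
      funext x
      have hd : ∀ j : Fin l, fderiv ℝ (fun y => evalFnC Q y * f y + r y) x (Pi.single j 1)
          = evalFnC (pderiv j Q) x * f x + evalFnC Q x * fderiv ℝ f x (Pi.single j 1)
            + fderiv ℝ r x (Pi.single j 1) := by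
        intro j
        rw [fderiv_fun_add (hPf x) (hrd x)]
        have hm : fderiv ℝ (fun y => evalFnC Q y * f y) x
            = evalFnC Q x • fderiv ℝ f x + f x • fderiv ℝ (evalFnC Q) x :=
          fderiv_fun_mul (((contDiff_evalFnC Q).differentiable (by simp)) x)
            ((hf.differentiable (by simp)) x)
        rw [ContinuousLinearMap.add_apply, hm]
        simp only [ContinuousLinearMap.add_apply, ContinuousLinearMap.smul_apply, smul_eq_mul]
        rw [fderiv_evalFnC_single]
        ring
      rw [hd q.1, hd q.2]
      have hps : evalFnC (polyStep Q q) x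
          = evalFnC (pderiv q.1 Q) x - evalFnC (pderiv q.2 Q) x := by
        show ((eval x (polyStep Q q) : ℝ) : ℂ) = _
        rw [polyStep, map_sub]
        push_cast
        rfl
      rw [hps]
      ring
    rw [key]
    have hQ' : (polyStep Q q).IsHomogeneous L.length := by
      have hQ1 : Q.IsHomogeneous (L.length + 1) := hQ
      exact (isHomogeneous_pderiv hQ1 q.1).sub (isHomogeneous_pderiv hQ1 q.2)
    have hzc : Zc (L.length + 1) (fun x =>
        (evalFnC Q x * (fderiv ℝ f x (Pi.single q.1 1) - fderiv ℝ f x (Pi.single q.2 1)))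
          + (fderiv ℝ r x (Pi.single q.1 1) - fderiv ℝ r x (Pi.single q.2 1))) := by
      have h1 : Zc (L.length + 1) (evalFnC Q) := Zc.homog hQ
      have h2 : ContDiff ℝ (⊤ : ℕ∞) (fun x =>
          fderiv ℝ f x (Pi.single q.1 1) - fderiv ℝ f x (Pi.single q.2 1)) :=
        (contDiff_fderiv_apply hf _).sub (contDiff_fderiv_apply hf _)
      have h3 : Zc (L.length + 2) r := hr
      exact (h1.mul_smooth h2).add ((h3.2.2 _).sub (h3.2.2 _))
    exact ih (polyStep Q q) hQ' _ hzc


lemma fact_prod_eq (l : ℕ) :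
    Nat.factorial l * ∏ i : Fin l, Nat.factorial (i : ℕ)
      = ∏ k ∈ Icc 1 l, Nat.factorial k := by
  have h2 : range (l + 1) = insert 0 (Icc 1 l) := by
    ext k
    simp only [Finset.mem_range, Finset.mem_insert, Finset.mem_Icc]
    omega
  calc Nat.factorial l * ∏ i : Fin l, Nat.factorial (i : ℕ)
      = Nat.factorial l * ∏ k ∈ range l, Nat.factorial k := by
        rw [Fin.prod_univ_eq_prod_range]
    _ = (∏ k ∈ range l, Nat.factorial k) * Nat.factorial l := mul_comm _ _
    _ = ∏ k ∈ range (l + 1), Nat.factorial k := (Finset.prod_range_succ _ _).symm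
    _ = ∏ k ∈ insert 0 (Icc 1 l), Nat.factorial k := by rw [h2]
    _ = Nat.factorial 0 * ∏ k ∈ Icc 1 l, Nat.factorial k := Finset.prod_insert (by simp)
    _ = ∏ k ∈ Icc 1 l, Nat.factorial k := by rw [Nat.factorial_zero, one_mul]

theorem main (l : ℕ) (f : (Fin l → ℝ) → ℂ) (hf : ContDiff ℝ (⊤ : ℕ∞) f) :
    vandermondeDiffOp l
        (fun x => (∏ j : Fin l, ∏ k ∈ Finset.Ioi j, ((x j : ℂ) - (x k : ℂ))) * f x) 0 =
      (∏ k ∈ Finset.Icc 1 l, (Nat.factorial k : ℂ)) * f 0 := by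
  classical
  unfold vandermondeDiffOp
  set S := (Finset.univ.filter fun q : Fin l × Fin l => q.1 < q.2) with hS
  set π := ∏ j : Fin l, ∏ k ∈ Ioi j, (X j - X k : MvPolynomial (Fin l) ℝ) with hπ
  have hprodS : (∏ q ∈ S, (X q.1 - X q.2 : MvPolynomial (Fin l) ℝ)) = π := by
    rw [hS, hπ, Finset.prod_filter, ← Finset.univ_product_univ, Finset.prod_product]
    refine Finset.prod_congr rfl fun j _ => ?_
    rw [← Finset.prod_filter]
    congr 1
    ext k
    simp
  have hcard : S.card = ∑ j : Fin l, (Ioi j).card := by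
    rw [hS, Finset.card_filter, ← Finset.univ_product_univ, Finset.sum_product]
    refine Finset.sum_congr rfl fun j _ => ?_
    rw [Finset.card_eq_sum_ones, ← Finset.sum_filter]
    congr 1
    ext k
    simp
  have hlen : S.toList.length = ∑ j : Fin l, (Ioi j).card := by
    rw [Finset.length_toList, hcard]
  have hhomog : π.IsHomogeneous S.toList.length := by
    rw [hlen]
    exact pi_homogeneous
  have hfun : (fun x : Fin l → ℝ =>
        (∏ j : Fin l, ∏ k ∈ Finset.Ioi j, ((x j : ℂ) - (x k : ℂ))) * f x)
      = fun x => evalFnC π x * f x + (fun _ : Fin l → ℝ => (0 : ℂ)) x := by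
    funext x
    rw [add_zero]
    congr 1
    show _ = ((eval x π : ℝ) : ℂ)
    rw [hπ]
    simp only [map_prod, map_sub, eval_X]
    push_cast
    rfl
  rw [hfun, AN f hf S.toList π hhomog _ Zc.zero]
  congr 1
  show ((eval 0 (S.toList.foldl polyStep π) : ℝ) : ℂ) = _
  rw [foldl_eval0]
  have hmap : (S.toList.map fun q => (X q.1 - X q.2 : MvPolynomial (Fin l) ℝ)).prod = π :=
    (Finset.prod_map_toList S _).trans hprodS
  rw [hmap, B_pi_pi]
  have hn := fact_prod_eq l
  push_cast
  exact_mod_cast congrArg (fun n : ℕ => (n : ℂ)) hn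

end Stmt9Aux

theorem stmt_9 (l : ℕ) (hl : 1 ≤ l) (f : (Fin l → ℝ) → ℂ) (hf : ContDiff ℝ (⊤ : ℕ∞) f) :
    vandermondeDiffOp l
        (fun x => (∏ j : Fin l, ∏ k ∈ Finset.Ioi j, ((x j : ℂ) - (x k : ℂ))) * f x) 0 =
      (∏ k ∈ Finset.Icc 1 l, (Nat.factorial k : ℂ)) * f 0 := by
  exact Stmt9Aux.main l f hf
end

section
/- Let l ≥ 1 and m ≥ 0 be integers. Then ∫_{(ℝ^+)^l} ∏_{1 ≤ j < k ≤ l} (y_j - y_k)^2 · ∏_{j=1}^{l} y_j^{m} · e^{-(y_1 + ⋯ + y_l)} \, dy_1⋯dy_l = l! · det[(j+k+m-2)!]_{j,k=1}^l = l! · (∏_{k=0}^{l-1} (k+m)!) · (∏_{k=1}^{l-1} k!). -/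
open Finset MeasureTheory Real

lemma int_pow_exp (n : ℕ) : ∫ x in Set.Ioi (0:ℝ), x ^ n * Real.exp (-x) = n.factorial := by
  have h := Real.Gamma_eq_integral (s := (n:ℝ)+1) (by positivity)
  rw [Real.Gamma_nat_eq_factorial] at h
  simp only [add_sub_cancel_right, Real.rpow_natCast] at h
  rw [h]
  exact setIntegral_congr_fun measurableSet_Ioi fun x hx => mul_comm _ _

lemma intg_pow_exp (n : ℕ) : IntegrableOn (fun x : ℝ => x ^ n * Real.exp (-x)) (Set.Ioi 0) := by
  have h := Real.GammaIntegral_convergent (s := (n:ℝ)+1) (by positivity)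
  simp only [add_sub_cancel_right, Real.rpow_natCast] at h
  exact h.congr_fun (fun x hx => mul_comm _ _) measurableSet_Ioi

lemma indicator_pi_prod (l : ℕ) (e : Fin l → ℕ) :
    (Set.univ.pi fun _ : Fin l => Set.Ioi (0:ℝ)).indicator
        (fun y => ∏ i, (y i ^ e i * Real.exp (-(y i)))) =
      fun y => ∏ i, (Set.Ioi 0).indicator (fun x => x ^ e i * Real.exp (-x)) (y i) := by
  funext y
  by_cases hy : y ∈ Set.univ.pi fun _ : Fin l => Set.Ioi (0:ℝ)
  · rw [Set.indicator_of_mem hy]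
    refine Finset.prod_congr rfl fun i _ => ?_
    rw [Set.indicator_of_mem (hy i (Set.mem_univ i))]
  · rw [Set.indicator_of_notMem hy]
    simp only [Set.mem_pi, Set.mem_univ, forall_true_left, not_forall] at hy
    obtain ⟨i, hi⟩ := hy
    exact (Finset.prod_eq_zero (Finset.mem_univ i) (by rw [Set.indicator_of_notMem hi])).symm

lemma pi_factor_integral (l : ℕ) (e : Fin l → ℕ) :
    (∫ y in Set.univ.pi fun _ : Fin l => Set.Ioi (0:ℝ),
        ∏ i, (y i ^ e i * Real.exp (-(y i)))) = ∏ i, ((e i).factorial : ℝ) := by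
  rw [← integral_indicator (MeasurableSet.univ_pi fun _ => measurableSet_Ioi),
    indicator_pi_prod l e,
    integral_fintype_prod_volume_eq_prod
      (f := fun i => (Set.Ioi (0:ℝ)).indicator (fun x => x ^ e i * Real.exp (-x)))]
  exact Finset.prod_congr rfl fun i _ => by
    rw [integral_indicator measurableSet_Ioi, int_pow_exp]

lemma pi_factor_integrable (l : ℕ) (e : Fin l → ℕ) :
    IntegrableOn (fun y : Fin l → ℝ => ∏ i, (y i ^ e i * Real.exp (-(y i))))
      (Set.univ.pi fun _ : Fin l => Set.Ioi (0:ℝ)) := by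
  refine (integrable_indicator_iff (MeasurableSet.univ_pi fun _ => measurableSet_Ioi)).1 ?_
  rw [indicator_pi_prod l e]
  exact Integrable.fintype_prod fun i =>
    (integrable_indicator_iff measurableSet_Ioi).2 (intg_pow_exp (e i))

lemma perm_sign_mul_self (l : ℕ) (σ : Equiv.Perm (Fin l)) :
    ((Equiv.Perm.sign σ : ℤ) : ℝ) * ((Equiv.Perm.sign σ : ℤ) : ℝ) = 1 := by
  rcases Int.units_eq_one_or (Equiv.Perm.sign σ) with h | h <;> rw [h] <;> norm_num

lemma vand_det_expand (l : ℕ) (y : Fin l → ℝ) :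
    (Matrix.vandermonde y).det =
      ∑ σ : Equiv.Perm (Fin l), ((Equiv.Perm.sign σ : ℤ) : ℝ) * ∏ i, y i ^ (σ i : ℕ) := by
  rw [← Matrix.det_transpose, Matrix.det_apply']
  exact Finset.sum_congr rfl fun σ _ => by simp [Matrix.vandermonde]

lemma pointwise_expand (l m : ℕ) (y : Fin l → ℝ) :
    (∏ j : Fin l, ∏ k ∈ Finset.Ioi j, (y j - y k) ^ 2) *
        (∏ j : Fin l, y j ^ m) * Real.exp (-∑ j : Fin l, y j) =
      ∑ σ : Equiv.Perm (Fin l), ∑ τ : Equiv.Perm (Fin l),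
        ((Equiv.Perm.sign σ : ℤ) : ℝ) * ((Equiv.Perm.sign τ : ℤ) : ℝ) *
          ∏ i, (y i ^ ((σ i : ℕ) + (τ i : ℕ) + m) * Real.exp (-(y i))) := by
  have hV : (∏ j : Fin l, ∏ k ∈ Finset.Ioi j, (y j - y k) ^ 2) =
      (Matrix.vandermonde y).det * (Matrix.vandermonde y).det := by
    rw [Matrix.det_vandermonde, ← Finset.prod_mul_distrib]
    refine Finset.prod_congr rfl fun j _ => ?_
    rw [← Finset.prod_mul_distrib]
    exact Finset.prod_congr rfl fun k _ => by ring
  have hE : Real.exp (-∑ j : Fin l, y j) = ∏ j : Fin l, Real.exp (-(y j)) := by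
    rw [← Real.exp_sum]
    congr 1
    rw [Finset.sum_neg_distrib]
  rw [hV, vand_det_expand, hE, Finset.sum_mul_sum]
  simp_rw [Finset.sum_mul]
  refine Finset.sum_congr rfl fun σ _ => Finset.sum_congr rfl fun τ _ => ?_
  have hprod : (∏ i, y i ^ (σ i : ℕ)) * (∏ i, y i ^ (τ i : ℕ)) * (∏ j : Fin l, y j ^ m)
      * (∏ j : Fin l, Real.exp (-(y j)))
      = ∏ i, (y i ^ ((σ i : ℕ) + (τ i : ℕ) + m) * Real.exp (-(y i))) := by
    rw [← Finset.prod_mul_distrib, ← Finset.prod_mul_distrib, ← Finset.prod_mul_distrib]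
    exact Finset.prod_congr rfl fun i _ => by rw [pow_add, pow_add]
  calc (((Equiv.Perm.sign σ : ℤ) : ℝ) * ∏ i, y i ^ (σ i : ℕ)) *
        (((Equiv.Perm.sign τ : ℤ) : ℝ) * ∏ i, y i ^ (τ i : ℕ)) *
        (∏ j : Fin l, y j ^ m) * (∏ j : Fin l, Real.exp (-(y j)))
      = ((Equiv.Perm.sign σ : ℤ) : ℝ) * ((Equiv.Perm.sign τ : ℤ) : ℝ) *
        ((∏ i, y i ^ (σ i : ℕ)) * (∏ i, y i ^ (τ i : ℕ)) * (∏ j : Fin l, y j ^ m)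
          * (∏ j : Fin l, Real.exp (-(y j)))) := by ring
    _ = _ := by rw [hprod]

lemma sum_perm_det (l m : ℕ) :
    (∑ σ : Equiv.Perm (Fin l), ∑ τ : Equiv.Perm (Fin l),
        ((Equiv.Perm.sign σ : ℤ) : ℝ) * ((Equiv.Perm.sign τ : ℤ) : ℝ) *
          ∏ i : Fin l, ((((σ i : ℕ) + (τ i : ℕ) + m).factorial : ℝ)))
      = (l.factorial : ℝ) *
        Matrix.det (Matrix.of fun j k : Fin l => (((j : ℕ) + (k : ℕ) + m).factorial : ℝ)) := by
  have inner : ∀ σ : Equiv.Perm (Fin l),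
      (∑ τ : Equiv.Perm (Fin l),
        ((Equiv.Perm.sign σ : ℤ) : ℝ) * ((Equiv.Perm.sign τ : ℤ) : ℝ) *
          ∏ i : Fin l, ((((σ i : ℕ) + (τ i : ℕ) + m).factorial : ℝ)))
      = Matrix.det (Matrix.of fun j k : Fin l => (((j : ℕ) + (k : ℕ) + m).factorial : ℝ)) := by
    intro σ
    rw [← Equiv.sum_comp (Equiv.mulRight σ), Matrix.det_apply']
    refine Finset.sum_congr rfl fun pp _ => ?_
    have h1 : ∀ i : Fin l, ((Equiv.mulRight σ pp) i : Fin l) = pp (σ i) := fun i => rfl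
    have h2 : (∏ i : Fin l, ((((σ i : ℕ) + ((pp (σ i)) : ℕ) + m).factorial : ℝ)))
        = ∏ j : Fin l, ((((j : ℕ) + ((pp j) : ℕ) + m).factorial : ℝ)) :=
      Equiv.prod_comp σ fun j => (((j : ℕ) + ((pp j) : ℕ) + m).factorial : ℝ)
    simp only [Equiv.coe_mulRight, Equiv.Perm.coe_mul, Function.comp_apply, map_mul]
    push_cast
    rw [show (∏ i : Fin l, ((((σ i : ℕ) + ((pp (σ i)) : ℕ) + m).factorial : ℝ)))
        = ∏ j : Fin l, ((((j : ℕ) + ((pp j) : ℕ) + m).factorial : ℝ)) from h2]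
    rw [mul_comm ((Equiv.Perm.sign pp : ℤ) : ℝ) ((Equiv.Perm.sign σ : ℤ) : ℝ), ← mul_assoc,
      mul_assoc _ _ ((Equiv.Perm.sign pp : ℤ) : ℝ), ← mul_assoc, perm_sign_mul_self, one_mul]
    congr 1
    exact Finset.prod_congr rfl fun j _ => by rw [Matrix.of_apply, add_comm ((j:ℕ)) ((pp j : ℕ))]
  rw [Finset.sum_congr rfl fun σ _ => inner σ, Finset.sum_const, Finset.card_univ,
    Fintype.card_perm, Fintype.card_fin, nsmul_eq_mul]

lemma part1 (l m : ℕ) :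
    (∫ y in Set.univ.pi fun _ : Fin l => Set.Ioi (0 : ℝ),
        (∏ j : Fin l, ∏ k ∈ Finset.Ioi j, (y j - y k) ^ 2) *
          (∏ j : Fin l, y j ^ m) * Real.exp (-∑ j : Fin l, y j)) =
      (l.factorial : ℝ) *
        Matrix.det (Matrix.of fun j k : Fin l => (((j : ℕ) + (k : ℕ) + m).factorial : ℝ)) := by
  rw [← sum_perm_det l m]
  have h1 : (∫ y in Set.univ.pi fun _ : Fin l => Set.Ioi (0 : ℝ),
      (∏ j : Fin l, ∏ k ∈ Finset.Ioi j, (y j - y k) ^ 2) *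
        (∏ j : Fin l, y j ^ m) * Real.exp (-∑ j : Fin l, y j)) =
      ∫ y in Set.univ.pi fun _ : Fin l => Set.Ioi (0 : ℝ),
        ∑ σ : Equiv.Perm (Fin l), ∑ τ : Equiv.Perm (Fin l),
          ((Equiv.Perm.sign σ : ℤ) : ℝ) * ((Equiv.Perm.sign τ : ℤ) : ℝ) *
            ∏ i, (y i ^ ((σ i : ℕ) + (τ i : ℕ) + m) * Real.exp (-(y i))) :=
    integral_congr_ae (Filter.Eventually.of_forall fun y => pointwise_expand l m y)
  rw [h1, integral_finset_sum _ (fun σ _ => integrable_finset_sum _ (fun τ _ =>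
    ((pi_factor_integrable l fun i => (σ i : ℕ) + (τ i : ℕ) + m).const_mul _)))]
  refine Finset.sum_congr rfl fun σ _ => ?_
  rw [integral_finset_sum _ (fun τ _ =>
    ((pi_factor_integrable l fun i => (σ i : ℕ) + (τ i : ℕ) + m).const_mul _))]
  refine Finset.sum_congr rfl fun τ _ => ?_
  rw [MeasureTheory.integral_const_mul, pi_factor_integral]

lemma fact_split (m j k : ℕ) :
    (j + k + m).factorial = (k + m).factorial * ∏ i ∈ Finset.range j, (k + m + 1 + i) := by
  induction j with
  | zero => simp
  | succ j ih =>
    have h : j + 1 + k + m = (j + k + m) + 1 := by omega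
    rw [h, Nat.factorial_succ, ih, Finset.prod_range_succ,
      show j + k + m + 1 = k + m + 1 + j from by omega]
    ring

lemma inner_prod_fact (l : ℕ) (i : Fin l) :
    (∏ j ∈ Finset.Ioi i, (((j : ℕ) : ℝ) - ((i : ℕ) : ℝ))) = ((l - 1 - (i : ℕ)).factorial : ℝ) := by
  rw [← Finset.prod_range_add_one_eq_factorial]
  push_cast
  refine Finset.prod_bij' (fun j _ => (j : ℕ) - (i : ℕ) - 1)
    (fun t ht => ⟨(i : ℕ) + 1 + t, by
      have h1 := Finset.mem_range.1 ht
      have h2 := i.isLt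
      omega⟩) ?_ ?_ ?_ ?_ ?_
  · intro j hj
    have h1 : (i : ℕ) < (j : ℕ) := Fin.lt_def.1 (Finset.mem_Ioi.1 hj)
    have h2 := j.isLt
    simp only [Finset.mem_range]
    omega
  · intro t ht
    have h1 := Finset.mem_range.1 ht
    rw [Finset.mem_Ioi]
    show (i : ℕ) < (i : ℕ) + 1 + t
    omega
  · intro j hj
    have h1 : (i : ℕ) < (j : ℕ) := Fin.lt_def.1 (Finset.mem_Ioi.1 hj)
    ext
    show (i : ℕ) + 1 + ((j : ℕ) - (i : ℕ) - 1) = (j : ℕ)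
    omega
  · intro t ht
    have h1 := Finset.mem_range.1 ht
    show ((⟨(i : ℕ) + 1 + t, _⟩ : Fin l) : ℕ) - (i : ℕ) - 1 = t
    simp only [Fin.val_mk]
    omega
  · intro j hj
    have h1 : (i : ℕ) < (j : ℕ) := Fin.lt_def.1 (Finset.mem_Ioi.1 hj)
    show ((j : ℕ) : ℝ) - ((i : ℕ) : ℝ) = (((j : ℕ) - (i : ℕ) - 1 : ℕ) : ℝ) + 1
    rw [show (j : ℕ) - (i : ℕ) - 1 = (j : ℕ) - ((i : ℕ) + 1) from by omega,
      Nat.cast_sub (by omega)]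
    push_cast
    ring

lemma vand_nat_value (l : ℕ) (hl : 1 ≤ l) :
    (∏ i : Fin l, ∏ j ∈ Finset.Ioi i, (((j : ℕ) : ℝ) - ((i : ℕ) : ℝ)))
      = ∏ k ∈ Finset.Icc 1 (l - 1), (k.factorial : ℝ) := by
  have h1 : (∏ i : Fin l, ∏ j ∈ Finset.Ioi i, (((j : ℕ) : ℝ) - ((i : ℕ) : ℝ)))
      = ∏ i : Fin l, ((l - 1 - (i : ℕ)).factorial : ℝ) :=
    Finset.prod_congr rfl fun i _ => inner_prod_fact l i
  rw [h1, Fin.prod_univ_eq_prod_range (fun i => ((l - 1 - i).factorial : ℝ)) l,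
    Finset.prod_range_reflect (fun k => (k.factorial : ℝ)) l,
    Finset.range_eq_Ico, Finset.prod_eq_prod_Ico_succ_bot (by omega : 0 < l),
    show l = (l - 1) + 1 from by omega, Finset.Ico_add_one_right_eq_Icc]
  simp [Nat.factorial_zero]

lemma part2 (l m : ℕ) (hl : 1 ≤ l) :
    Matrix.det (Matrix.of fun j k : Fin l => (((j : ℕ) + (k : ℕ) + m).factorial : ℝ))
      = (∏ k ∈ Finset.range l, ((k + m).factorial : ℝ)) *
        ∏ k ∈ Finset.Icc 1 (l - 1), (k.factorial : ℝ) := by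
  set p : Fin l → Polynomial ℝ :=
    fun j => ∏ i ∈ Finset.range (j : ℕ), (Polynomial.X + Polynomial.C ((m : ℝ) + 1 + i)) with hp
  have hmonic : ∀ j, (p j).Monic :=
    fun j => Polynomial.monic_prod_of_monic _ _ fun i _ => Polynomial.monic_X_add_C _
  have hdeg : ∀ j : Fin l, (p j).natDegree = (j : ℕ) := by
    intro j
    rw [hp, Polynomial.natDegree_prod_of_monic _ _ fun i _ => Polynomial.monic_X_add_C _,
      Finset.sum_congr rfl fun i _ => Polynomial.natDegree_X_add_C _]
    simp
  have heval : ∀ (j : Fin l) (x : ℝ), (p j).eval x = ∏ i ∈ Finset.range (j : ℕ), (x + ((m : ℝ) + 1 + i)) := by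
    intro j x
    rw [hp, Polynomial.eval_prod]
    exact Finset.prod_congr rfl fun i _ => by simp
  have hentry : (Matrix.of fun j k : Fin l => (((j : ℕ) + (k : ℕ) + m).factorial : ℝ))
      = Matrix.of fun j k : Fin l => (((k : ℕ) + m).factorial : ℝ) * (p j).eval ((k : ℕ) : ℝ) := by
    ext j k
    rw [Matrix.of_apply, Matrix.of_apply, heval, fact_split m (j : ℕ) (k : ℕ)]
    push_cast
    congr 1
    exact Finset.prod_congr rfl fun i _ => by ring
  rw [hentry, show (Matrix.of fun j k : Fin l => (((k : ℕ) + m).factorial : ℝ) * (p j).eval ((k : ℕ) : ℝ))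
      = Matrix.of fun j k : Fin l => (fun k : Fin l => (((k : ℕ) + m).factorial : ℝ)) k *
        (Matrix.of fun j k : Fin l => (p j).eval ((k : ℕ) : ℝ)) j k from rfl,
    Matrix.det_mul_row]
  congr 1
  · rw [Fin.prod_univ_eq_prod_range (fun k => ((k + m).factorial : ℝ)) l]
  · rw [← Matrix.det_transpose,
      show (Matrix.of fun j k : Fin l => (p j).eval ((k : ℕ) : ℝ)).transpose
        = Matrix.of fun i j : Fin l => (p j).eval (((i : ℕ) : ℝ)) from by ext i j; rfl,
      ← Matrix.det_eval_matrixOfPolynomials_eq_det_vandermonde (fun i : Fin l => ((i : ℕ) : ℝ)) p hdeg hmonic,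
      Matrix.det_vandermonde]
    exact vand_nat_value l hl

theorem stmt_12 (l : ℕ) (hl : 1 ≤ l) (m : ℕ) :
    (∫ y in Set.univ.pi fun _ : Fin l => Set.Ioi (0 : ℝ),
        (∏ j : Fin l, ∏ k ∈ Finset.Ioi j, (y j - y k) ^ 2) *
          (∏ j : Fin l, y j ^ m) * Real.exp (-∑ j : Fin l, y j)) =
      (Nat.factorial l : ℝ) *
        Matrix.det (Matrix.of fun j k : Fin l =>
          (Nat.factorial ((j : ℕ) + (k : ℕ) + m) : ℝ)) ∧
    Matrix.det (Matrix.of fun j k : Fin l =>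
        (Nat.factorial ((j : ℕ) + (k : ℕ) + m) : ℝ)) =
      (∏ k ∈ Finset.range l, (Nat.factorial (k + m) : ℝ)) *
        ∏ k ∈ Finset.Icc 1 (l - 1), (Nat.factorial k : ℝ) := by
  exact ⟨part1 l m, part2 l m hl⟩
end

section
/- Let x, y be square matrices (over ℝ, ℂ or ℍ) such that x - 1, y - 1, and x + y are invertible, and set c(z) = (z+1)(z-1)^{-1}. Then c(c(x)·c(y)) = (y-1)(x+y)^{-1}(x-1) + 1. -/
/-- The Cayley transform `c(z) = (z+1)(z-1)⁻¹` (via `Ring.inverse`). -/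
noncomputable def cayley {R : Type*} [Ring R] (x : R) : R :=
  (x + 1) * Ring.inverse (x - 1)

/-!
Writing `c(z) = 1 + 2 (z-1)⁻¹`, one finds `c(x) c(y) - 1 = (x-1)⁻¹ (x+y) (y-1)⁻¹ · 2`, whose inverse
is `½ (y-1)(x+y)⁻¹(x-1)`; substituting this into `c(w) = 1 + 2 (w-1)⁻¹` gives the formula.
-/

open scoped Ring

section

variable {R : Type*} [Ring R]

theorem inverse_inverse_mul_mul_inverse {a b c : R} (ha : IsUnit a) (hc : IsUnit c) :
    (a⁻¹ʳ * b * c⁻¹ʳ)⁻¹ʳ = c * b⁻¹ʳ * a := by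
  rw [Ring.inverse_mul (Or.inr hc.ringInverse), Ring.inverse_mul (Or.inl ha.ringInverse),
    Ring.inverse_inverse hc, Ring.inverse_inverse ha, mul_assoc]

theorem cayley_eq_one_add_two_mul_inverse {z : R} (hz : IsUnit (z - 1)) :
    cayley z = 1 + 2 * (z - 1)⁻¹ʳ := by
  rw [cayley, show z + 1 = (z - 1) + 2 by rw [← one_add_one_eq_two]; abel, add_mul,
    Ring.mul_inverse_cancel _ hz]

theorem cayley_mul_cayley_sub_one {x y : R} (hx : IsUnit (x - 1)) (hy : IsUnit (y - 1)) :
    cayley x * cayley y - 1 = (x - 1)⁻¹ʳ * (x + y) * (y - 1)⁻¹ʳ * 2 := by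
  have hsum : (x - 1)⁻¹ʳ * (x + y) * (y - 1)⁻¹ʳ
      = (y - 1)⁻¹ʳ + (x - 1)⁻¹ʳ + 2 * ((x - 1)⁻¹ʳ * (y - 1)⁻¹ʳ) := by
    calc (x - 1)⁻¹ʳ * (x + y) * (y - 1)⁻¹ʳ
        = ((x - 1)⁻¹ʳ * (x - 1)) * (y - 1)⁻¹ʳ + (x - 1)⁻¹ʳ * ((y - 1) * (y - 1)⁻¹ʳ)
            + 2 * ((x - 1)⁻¹ʳ * (y - 1)⁻¹ʳ) := by noncomm_ring
      _ = _ := by rw [Ring.inverse_mul_cancel _ hx, Ring.mul_inverse_cancel _ hy, one_mul, mul_one]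
  rw [cayley_eq_one_add_two_mul_inverse hx, cayley_eq_one_add_two_mul_inverse hy, hsum]
  noncomm_ring

theorem isUnit_cayley_mul_cayley_sub_one {x y : R} (hx : IsUnit (x - 1)) (hy : IsUnit (y - 1))
    (hxy : IsUnit (x + y)) (h2 : IsUnit (2 : R)) : IsUnit (cayley x * cayley y - 1) := by
  rw [cayley_mul_cayley_sub_one hx hy]
  exact ((hx.ringInverse.mul hxy).mul hy.ringInverse).mul h2

theorem cayley_cayley_mul_cayley {x y : R} (hx : IsUnit (x - 1)) (hy : IsUnit (y - 1))
    (hxy : IsUnit (x + y)) (h2 : IsUnit (2 : R)) :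
    cayley (cayley x * cayley y) = (y - 1) * (x + y)⁻¹ʳ * (x - 1) + 1 := by
  rw [cayley_eq_one_add_two_mul_inverse (isUnit_cayley_mul_cayley_sub_one hx hy hxy h2),
    cayley_mul_cayley_sub_one hx hy, Ring.inverse_mul (Or.inr h2),
    Ring.mul_inverse_cancel_left _ _ h2, inverse_inverse_mul_mul_inverse hx hy, add_comm]

end

/-- Howe's composition formula for the Cayley transform.  We state it for an
arbitrary (possibly noncommutative) `ℝ`-algebra `R`, which covers in
particular the rings of square matrices over `ℝ`, `ℂ` and `ℍ`. -/
theorem stmt_15 {R : Type*} [Ring R] [Algebra ℝ R] (x y : R)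
    (hx : IsUnit (x - 1)) (hy : IsUnit (y - 1)) (hxy : IsUnit (x + y)) :
    IsUnit (cayley x * cayley y - 1) ∧
      cayley (cayley x * cayley y) =
        (y - 1) * Ring.inverse (x + y) * (x - 1) + 1 := by
  have h2 : IsUnit (2 : R) := by
    simpa only [map_ofNat] using (IsUnit.mk0 (2 : ℝ) two_ne_zero).map (algebraMap ℝ R)
  exact ⟨isUnit_cayley_mul_cayley_sub_one hx hy hxy h2, cayley_cayley_mul_cayley hx hy hxy h2⟩
end

section
/- Let l ≤ l' be positive integers, δ = (l'-l+1)/2, and let μ' = (μ'_1, …, μ'_{l'}) be a strictly decreasing sequence with μ'_j = δ - j for 1 ≤ j ≤ l'-l and -μ'_k ∈ δ + ℤ_{≥0} for l'-l+1 ≤ k ≤ l'. Then the Weyl dimension formula product ∏_{1 ≤ j < k ≤ l'} (μ'_j - μ'_k)/(k - j) equals (1/∏_{j=1}^{l} (l'-j)!) · ∏_{j=l'-l+1}^{l'} ((δ - μ'_j - 1)!/(-μ'_j - δ)!) · ∏_{l'-l+1 ≤ j < k ≤ l'} (μ'_j - μ'_k). -/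
/-!
The Weyl denominator is `∏_{j<k<l'} (k - j) = ∏_{k<l'} k!`. Put `m = l' - l`. For `j < k < m` the
string gives `μ'_j - μ'_k = k - j`, so these pairs contribute `∏_{k<m} k!`, cancelling the first
`m` factorials of the denominator and leaving `∏_{m ≤ k < l'} k! = ∏_{j=1}^{l} (l'-j)!`. For
`j < m ≤ k` one has `μ'_j - μ'_k = m - j + ν_k` because `2δ - 1 = m`, and the product of these
over `j < m` is `(m + ν_k)! / ν_k!`.
-/

open Finset
open scoped Nat

theorem Nat.cast_descFactorial_eq_prod_range_sub {R : Type*} [CommRing R] {N k : ℕ} (h : k ≤ N) :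
    (N.descFactorial k : R) = ∏ i ∈ range k, ((N : R) - i) := by
  rw [Nat.descFactorial_eq_prod_range, Nat.cast_prod]
  exact prod_congr rfl fun i hi => Nat.cast_sub (by grind)

theorem prod_range_natCast_sub_self {R : Type*} [CommRing R] (N : ℕ) :
    ∏ i ∈ range N, ((N : R) - i) = N ! := by
  rw [← Nat.cast_descFactorial_eq_prod_range_sub le_rfl, Nat.descFactorial_self]

theorem prod_range_natCast_sub_add {K : Type*} [Field K] [CharZero K] (m ν : ℕ) :
    ∏ j ∈ range m, ((m : K) - j + ν) = (m + ν)! / ν ! := by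
  have hdesc := Nat.factorial_mul_descFactorial (Nat.le_add_right m ν)
  rw [Nat.add_sub_cancel_left] at hdesc
  rw [eq_div_iff (Nat.cast_ne_zero.2 (Nat.factorial_ne_zero ν)), ← hdesc, Nat.cast_mul,
    Nat.cast_descFactorial_eq_prod_range_sub (Nat.le_add_right m ν), mul_comm]
  push_cast
  exact congrArg _ (prod_congr rfl fun j _ => by ring)

theorem prod_range_prod_Ioo_natCast_sub {R : Type*} [CommRing R] (N : ℕ) :
    ∏ j ∈ range N, ∏ k ∈ Ioo j N, ((k : R) - j) = ∏ k ∈ range N, (k ! : R) := by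
  rw [prod_comm' (t' := range N) (s' := fun k => range k) (by grind)]
  exact prod_congr rfl fun k _ => prod_range_natCast_sub_self k

theorem prod_Icc_one_sub_eq_prod_Ico {M : Type*} [CommMonoid M] (f : ℕ → M) {l n : ℕ}
    (h : l ≤ n) : ∏ j ∈ Icc 1 l, f (n - j) = ∏ k ∈ Ico (n - l) n, f k := by
  refine prod_nbij' (n - ·) (n - ·) ?_ ?_ ?_ ?_ fun _ _ => rfl <;>
    intro j hj <;> simp only [mem_Icc, mem_Ico] at hj ⊢ <;> omega

theorem Fin.prod_Ioi_eq_prod_Ioo {M : Type*} [CommMonoid M] {n : ℕ} (g : ℕ → M) (j : Fin n) :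
    ∏ k ∈ Ioi j, g k = ∏ k ∈ Ioo (j : ℕ) n, g k := by
  rw [← Fin.map_valEmbedding_Ioi, prod_map]
  rfl

theorem Fin.prod_filter_le_val_eq_prod_Ico {M : Type*} [CommMonoid M] (g : ℕ → M) (m n : ℕ) :
    ∏ j ∈ univ.filter (fun j : Fin n => m ≤ (j : ℕ)), g j = ∏ j ∈ Ico m n, g j := by
  rw [prod_filter, Fin.prod_univ_eq_prod_range (fun j => if m ≤ j then g j else 1), ← prod_filter]
  congr 1
  ext j
  simp only [mem_filter, mem_range, mem_Ico]
  omega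

section ArithmeticString

variable {n m : ℕ} {δ : ℝ} {x : ℕ → ℝ} {ν : ℕ → ℕ}

theorem prod_range_prod_Ioo_sub_of_string (hm : m ≤ n) (hδ : δ = ((m : ℝ) + 1) / 2)
    (hlo : ∀ j < m, x j = δ - (j + 1)) (hhi : ∀ k, m ≤ k → k < n → x k = -δ - ν k) :
    ∏ j ∈ range m, ∏ k ∈ Ioo j n, (x j - x k) =
      (∏ k ∈ range m, (k ! : ℝ)) * ∏ k ∈ Ico m n, ((m + ν k)! / (ν k)! : ℝ) := by
  have hsplit : ∀ j ∈ range m, ∏ k ∈ Ioo j n, (x j - x k) =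
      (∏ k ∈ Ioo j m, ((k : ℝ) - j)) * ∏ k ∈ Ico m n, ((m : ℝ) - j + ν k) := by
    intro j hj
    rw [mem_range] at hj
    rw [← Ico_add_one_left_eq_Ioo, ← prod_Ico_consecutive _ (show j + 1 ≤ m from hj) hm,
      Ico_add_one_left_eq_Ioo]
    congr 1 <;> refine prod_congr rfl fun k hk => ?_
    · rw [mem_Ioo] at hk
      rw [hlo j hj, hlo k hk.2]
      ring
    · rw [mem_Ico] at hk
      rw [hlo j hj, hhi k hk.1 hk.2, hδ]
      ring
  rw [prod_congr rfl hsplit, prod_mul_distrib, prod_range_prod_Ioo_natCast_sub, prod_comm]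
  exact congrArg _ (prod_congr rfl fun k _ => prod_range_natCast_sub_add m (ν k))

theorem prod_range_prod_Ioo_div_sub_of_string (hm : m ≤ n) (hδ : δ = ((m : ℝ) + 1) / 2)
    (hlo : ∀ j < m, x j = δ - (j + 1)) (hhi : ∀ k, m ≤ k → k < n → x k = -δ - ν k) :
    ∏ j ∈ range n, ∏ k ∈ Ioo j n, (x j - x k) / ((k : ℝ) - j) =
      (∏ k ∈ Ico m n, (k ! : ℝ))⁻¹ * (∏ k ∈ Ico m n, ((m + ν k)! / (ν k)! : ℝ)) *
        ∏ j ∈ Ico m n, ∏ k ∈ Ioo j n, (x j - x k) := by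
  rw [prod_congr rfl fun j _ => prod_div_distrib _ _, prod_div_distrib,
    prod_range_prod_Ioo_natCast_sub, ← prod_range_mul_prod_Ico _ hm,
    ← prod_range_mul_prod_Ico _ hm, prod_range_prod_Ioo_sub_of_string hm hδ hlo hhi]
  have : ∏ k ∈ range m, (k ! : ℝ) ≠ 0 := prod_ne_zero_iff.2 fun k _ => by positivity
  rw [mul_assoc, mul_div_mul_left _ _ this]
  ring

end ArithmeticString

theorem stmt_18_general (l l' : ℕ) (hll' : l ≤ l')
    (δ : ℝ) (hδ : δ = ((l' : ℝ) - l + 1) / 2)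
    (μ' : Fin l' → ℝ)
    (ν : Fin l' → ℕ)
    (h1 : ∀ j : Fin l', (j : ℕ) < l' - l → μ' j = δ - ((j : ℕ) + 1))
    (h2 : ∀ j : Fin l', l' - l ≤ (j : ℕ) → μ' j = -δ - (ν j : ℝ)) :
    (∏ j : Fin l', ∏ k ∈ Finset.Ioi j, (μ' j - μ' k) / (((k : ℕ) : ℝ) - ((j : ℕ) : ℝ))) =
      (∏ j ∈ Finset.Icc 1 l, (Nat.factorial (l' - j) : ℝ))⁻¹ *
        (∏ j ∈ Finset.univ.filter fun j : Fin l' => l' - l ≤ (j : ℕ),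
          (Nat.factorial (l' - l + ν j) : ℝ) / (Nat.factorial (ν j) : ℝ)) *
        ∏ j ∈ Finset.univ.filter fun j : Fin l' => l' - l ≤ (j : ℕ),
          ∏ k ∈ Finset.Ioi j, (μ' j - μ' k) := by
  -- Writing `μ'` and `ν` as restrictions of functions on `ℕ` turns every product into one over
  -- an interval of `ℕ`.
  obtain ⟨x, rfl⟩ := Fin.val_injective.surjective_comp_right μ'
  obtain ⟨ν, rfl⟩ := Fin.val_injective.surjective_comp_right ν
  have key := prod_range_prod_Ioo_div_sub_of_string (Nat.sub_le l' l)
    (by rw [hδ, Nat.cast_sub hll']) (fun j hj => h1 ⟨j, by omega⟩ hj)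
    (fun k hk hk' => h2 ⟨k, hk'⟩ hk)
  rw [← prod_Icc_one_sub_eq_prod_Ico (fun k => (k ! : ℝ)) hll'] at key
  simpa only [Function.comp_apply, ← Fin.prod_univ_eq_prod_range, ← Fin.prod_Ioi_eq_prod_Ioo,
    ← Fin.prod_filter_le_val_eq_prod_Ico] using key

/-- The dimension formula for the genuine representation `Π'` of `U_{l'}` with
Harish-Chandra parameter `μ'`.  Here `δ = (l'-l+1)/2`, the first `l'-l`
coordinates of `μ'` are the string `δ-1, δ-2, …` (the `ρ`-shift of `U_{l'-l}`)
and the last `l` coordinates satisfy `-μ'_j = δ + ν_j` with `ν_j ∈ ℤ_{≥0}`;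
correspondingly `(δ - μ'_j - 1)! = (l'-l+ν_j)!` and `(-μ'_j - δ)! = ν_j!`. -/
theorem stmt_18 (l l' : ℕ) (hl : 1 ≤ l) (hll' : l ≤ l')
    (δ : ℝ) (hδ : δ = ((l' : ℝ) - l + 1) / 2)
    (μ' : Fin l' → ℝ) (hdec : ∀ j k : Fin l', j < k → μ' k < μ' j)
    (ν : Fin l' → ℕ)
    (h1 : ∀ j : Fin l', (j : ℕ) < l' - l → μ' j = δ - ((j : ℕ) + 1))
    (h2 : ∀ j : Fin l', l' - l ≤ (j : ℕ) → μ' j = -δ - (ν j : ℝ)) :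
    (∏ j : Fin l', ∏ k ∈ Finset.Ioi j, (μ' j - μ' k) / (((k : ℕ) : ℝ) - ((j : ℕ) : ℝ))) =
      (∏ j ∈ Finset.Icc 1 l, (Nat.factorial (l' - j) : ℝ))⁻¹ *
        (∏ j ∈ Finset.univ.filter fun j : Fin l' => l' - l ≤ (j : ℕ),
          (Nat.factorial (l' - l + ν j) : ℝ) / (Nat.factorial (ν j) : ℝ)) *
        ∏ j ∈ Finset.univ.filter fun j : Fin l' => l' - l ≤ (j : ℕ),
          ∏ k ∈ Finset.Ioi j, (μ' j - μ' k) :=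
  stmt_18_general l l' hll' δ hδ μ' ν h1 h2
end
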